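/- Let Δ be the complete fan in ℤ² with rays generated by (1,1), (1,-1), (-1,1), (-1,-1) and the four maximal cones between consecutive rays. Define a function g : Δ → ℤ to be a Grothendieck weight if and only if: g takes the same value d on all four maximal cones, and Σ_ρ (g(ρ) - d)·v_ρ = 0 where the sum is over the four rays with primitive generators v_ρ. Then the weight g₀ with g₀({0}) = 1 and g₀ = 0 on all rays and maximal cones is a Grothendieck weight, and g₀ is not in the ℤ-span of the four weights: (a) the constant weight 1; (b) the weight with value 2 at the origin, values (1,-1,1,-1) on rays (1,1),(1,-1),(-1,1),(-1,-1) respectively, and 0 on maximal cones; (c) the weight with value 2 at the origin, 0 on rays and maximal cones; (d) the weight with value -1 at origin, values (0,1,1,0) on rays (1,1),(1,-1),(-1,1),(-1,-1), and 0 on maximal cones. That is, g₀ ∉ ℤ·(a) + ℤ·(b) + ℤ·(c) + ℤ·(d). -/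
import Mathlib


/-- A function on the 9 cones of the fan with rays `(1,1), (1,-1), (-1,1), (-1,-1)`
(indexed: 0 = origin, 1–4 = the rays in the above order, 5–8 = the four maximal cones)
is a Grothendieck weight iff it takes a common value `d` on the maximal cones and
`Σ_ρ (g(ρ) - d) • v_ρ = 0`. -/
def IsGW (g : Fin 9 → ℤ) : Prop :=
  (g 5 = g 8 ∧ g 6 = g 8 ∧ g 7 = g 8) ∧
    (g 1 - g 8) • (![1, 1] : Fin 2 → ℤ) + (g 2 - g 8) • ![1, -1] +
      (g 3 - g 8) • ![-1, 1] + (g 4 - g 8) • ![-1, -1] = 0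

/-- the indicator weight of the origin is a Grothendieck weight, but is not an
integer combination of the four weights (a), (b), (c), (d) (the images of an `R(T)`-generating
set of piecewise exponential functions). -/
theorem stmt8 :
    IsGW ![1, 0, 0, 0, 0, 0, 0, 0, 0] ∧
    ¬ ∃ m₁ m₂ m₃ m₄ : ℤ,
      (![1, 0, 0, 0, 0, 0, 0, 0, 0] : Fin 9 → ℤ) =
        m₁ • ![1, 1, 1, 1, 1, 1, 1, 1, 1] +
        m₂ • ![2, 1, -1, 1, -1, 0, 0, 0, 0] +
        m₃ • ![2, 0, 0, 0, 0, 0, 0, 0, 0] +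
        m₄ • ![-1, 0, 1, 1, 0, 0, 0, 0, 0] := by
  constructor
  · refine ⟨⟨rfl, rfl, rfl⟩, ?_⟩
    funext i
    fin_cases i <;> rfl
  · rintro ⟨m₁, m₂, m₃, m₄, h⟩
    have h0 := congrFun h 0
    have h1 := congrFun h 1
    have h2 := congrFun h 2
    have h5 := congrFun h 5
    simp [show (5 : Fin 9) = Fin.succ 4 from rfl, Matrix.cons_val_succ] at h0 h1 h2 h5
    omega
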